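/- For every integer p ≥ 1 and every real number x with x ≠ 1, the following identity holds in the ring of formal power series ℝ⟦t⟧: Σ_{n=0}^∞ A_n^p(x)·t^n/n! = (1 − (x−1)^{−1}·σ^p((x−1)·t))^{−1}, where σ^p((x−1)·t) denotes the substitution of the series (x−1)·t into σ^p, and the right-hand side is the multiplicative inverse of a power series with constant term 1. -/

import Mathlib

/-- Stirling numbers of the second kind. -/
def S2 : ℕ → ℕ → ℕ
  | 0, 0 => 1
  | 0, _ + 1 => 0
  | _ + 1, 0 => 0
  | n + 1, m + 1 => (m + 1) * S2 n (m + 1) + S2 n m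

/-- Entries `S^p_{n,m}` of the `p`-th power of the Stirling matrix (for `p ≥ 1`;
the value at `p = 0` is junk). -/
def Sp : ℕ → ℕ → ℕ → ℕ
  | 0, _, _ => 0
  | 1, n, m => S2 n m
  | p + 2, n, m => ∑ k ∈ Finset.range (n + 1), S2 n k * Sp (p + 1) k m

/-- Composition `f ∘ g` of formal power series (the intended meaning when `g` has zero
constant term, in which case `coeff n (g ^ k) = 0` for `k > n`). -/
noncomputable def PSComp (f g : PowerSeries ℝ) : PowerSeries ℝ :=
  PowerSeries.mk fun n =>
    ∑ k ∈ Finset.range (n + 1), (PowerSeries.coeff (R := ℝ) k f) * (PowerSeries.coeff (R := ℝ) n (g ^ k))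

/-- `σ^p`, the `p`-fold compositional iterate of `exp X - 1` (with `σ^0 = X`). -/
noncomputable def sigmaP : ℕ → PowerSeries ℝ
  | 0 => PowerSeries.X
  | p + 1 => PSComp (sigmaP p) (PowerSeries.exp ℝ - 1)
/-- Higher order Eulerian numbers:
`A^p_{n,m} = ∑_{k=0}^n k!·S^p_{n,k}·C(n-k,m)·(-1)^{n-k-m}` (the terms with `m > n-k`
vanish since then the binomial coefficient is zero). -/
def EulerNum (p n m : ℕ) : ℤ :=
  ∑ k ∈ Finset.range (n + 1),
    (k.factorial * Sp p n k : ℤ) * ((n - k).choose m) * (-1) ^ (n - k - m)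

/-- Higher order Eulerian polynomials: `A_n^p(x) = ∑_{m=0}^n A^p_{n,m} x^m`. -/
noncomputable def EulerPoly (p n : ℕ) (x : ℝ) : ℝ :=
  ∑ m ∈ Finset.range (n + 1), (EulerNum p n m : ℝ) * x ^ m

/-! The power `(e^t - 1)^k` is the exponential generating function of `k! S(n, k)`: differentiating
it reproduces the Stirling recurrence. Composition with a series of zero constant term is a ring
homomorphism, so induction on `p` gives `(σ^p)^k = ∑ₙ k! S^p_{n,k} tⁿ/n!`. Summing the binomial
sums over `m` collapses `A_n^p(x)` to `∑ₖ k! S^p_{n,k} (x-1)^{n-k}`, so the generating function is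
the geometric series `∑ₖ uᵏ = (1 - u)⁻¹` in `u = (x-1)⁻¹ σ^p((x-1)t)`. -/

open PowerSeries Finset Nat

section Stirling

variable {K : Type*} [Field K] [CharZero K]

lemma constantCoeff_exp_sub_one : constantCoeff (exp K - 1) = 0 := by
  simp [constantCoeff_exp]

lemma derivative_exp_sub_one_pow (k : ℕ) :
    d⁄dX K ((exp K - 1) ^ (k + 1)) =
      C (k + 1 : K) * ((exp K - 1) ^ (k + 1) + (exp K - 1) ^ k) := by
  rw [derivative_pow, map_sub, derivative_exp, derivative_one, map_add, map_natCast, map_one]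
  push_cast
  ring

theorem coeff_exp_sub_one_pow (n k : ℕ) :
    coeff n ((exp K - 1) ^ k) = (k ! * S2 n k / n ! : K) := by
  induction n generalizing k with
  | zero =>
    cases k <;> simp [S2, constantCoeff_exp_sub_one]
  | succ n ih =>
    cases k with
    | zero => simp [S2]
    | succ k =>
      have hn : (n ! : K) ≠ 0 := cast_ne_zero.mpr (factorial_ne_zero n)
      have h := coeff_derivative ((exp K - 1) ^ (k + 1)) n
      rw [derivative_exp_sub_one_pow, coeff_C_mul, map_add, ih, ih] at h
      rw [eq_div_iff (cast_ne_zero.mpr (factorial_ne_zero _)), factorial_succ, cast_mul,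
        cast_succ, ← mul_assoc, ← h]
      simp only [S2, factorial_succ]
      field_simp
      push_cast
      ring

end Stirling

lemma PowerSeries.coeff_pow_eq_zero_of_lt {R : Type*} [CommSemiring R] {g : R⟦X⟧}
    (hg : constantCoeff g = 0) {n k : ℕ} (h : n < k) : coeff n (g ^ k) = 0 :=
  X_pow_dvd_iff.mp (pow_dvd_pow_of_dvd (X_dvd_iff.mpr hg) k) n h

section PSComp

variable {g : ℝ⟦X⟧}

theorem PSComp_eq_subst (hg : constantCoeff g = 0) (f : ℝ⟦X⟧) : PSComp f g = f.subst g := by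
  ext n
  rw [PSComp, coeff_mk, coeff_subst' (HasSubst.of_constantCoeff_zero' hg),
    finsum_eq_sum_of_support_subset (s := range (n + 1))]
  · simp only [smul_eq_mul]
  · intro k hk
    by_contra hkn
    simp only [coe_range, Set.mem_Iio, not_lt] at hkn
    simp [coeff_pow_eq_zero_of_lt hg (by omega : n < k)] at hk

lemma PSComp_pow (hg : constantCoeff g = 0) (f : ℝ⟦X⟧) (k : ℕ) :
    PSComp (f ^ k) g = PSComp f g ^ k := by
  simp only [PSComp_eq_subst hg, subst_pow (HasSubst.of_constantCoeff_zero' hg)]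

lemma constantCoeff_PSComp (f g : ℝ⟦X⟧) : constantCoeff (PSComp f g) = constantCoeff f := by
  rw [← coeff_zero_eq_constantCoeff_apply, PSComp, coeff_mk]
  simp

lemma PSComp_C_mul_X (f : ℝ⟦X⟧) (a : ℝ) : PSComp f (C a * X) = rescale a f := by
  rw [PSComp_eq_subst (by simp), rescale_eq_subst, smul_eq_C_mul]

lemma PSComp_mk_one (hg : constantCoeff g = 0) : PSComp (PowerSeries.mk 1) g = (1 - g)⁻¹ := by
  have hsub : HasSubst g := HasSubst.of_constantCoeff_zero' hg
  have hsub_one : (1 : ℝ⟦X⟧).subst g = 1 := by rw [← coe_substAlgHom hsub, map_one]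
  have h :
      (PowerSeries.mk 1 * (1 - X) : ℝ⟦X⟧).subst g = PSComp (PowerSeries.mk 1) g * (1 - g) := by
    rw [subst_mul hsub, subst_sub hsub, subst_X hsub, hsub_one, PSComp_eq_subst hg]
  rw [PowerSeries.eq_inv_iff_mul_eq_one (by simp [hg]), ← h, mk_one_mul_one_sub_eq_one, hsub_one]

end PSComp

lemma constantCoeff_sigmaP (p : ℕ) : constantCoeff (sigmaP p) = 0 := by
  induction p with
  | zero => simp [sigmaP]
  | succ p ih => rw [sigmaP, constantCoeff_PSComp, ih]

lemma sigmaP_one : sigmaP 1 = exp ℝ - 1 := by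
  rw [sigmaP, sigmaP, PSComp_eq_subst constantCoeff_exp_sub_one,
    subst_X (HasSubst.of_constantCoeff_zero' constantCoeff_exp_sub_one)]

lemma Sp_succ {p : ℕ} (hp : 1 ≤ p) (n m : ℕ) :
    Sp (p + 1) n m = ∑ k ∈ range (n + 1), S2 n k * Sp p k m := by
  obtain ⟨q, rfl⟩ := Nat.exists_eq_add_of_le' hp
  rfl

theorem coeff_sigmaP_pow {p : ℕ} (hp : 1 ≤ p) (n k : ℕ) :
    coeff n (sigmaP p ^ k) = (k ! * Sp p n k / n ! : ℝ) := by
  induction p, hp using le_induction generalizing n with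
  | base => rw [sigmaP_one, coeff_exp_sub_one_pow]; rfl
  | succ p hp ih =>
    rw [sigmaP, ← PSComp_pow constantCoeff_exp_sub_one, PSComp, coeff_mk, Sp_succ hp]
    push_cast
    rw [mul_sum, sum_div]
    refine sum_congr rfl fun j _ => ?_
    have hj : (j ! : ℝ) ≠ 0 := cast_ne_zero.mpr (factorial_ne_zero j)
    rw [ih, coeff_exp_sub_one_pow]
    field_simp

lemma sum_range_choose_mul_neg_one_pow_mul_pow {R : Type*} [CommRing R] (x : R) {N n : ℕ}
    (h : N ≤ n) :
    ∑ m ∈ range (n + 1), (N.choose m : R) * (-1) ^ (N - m) * x ^ m = (x - 1) ^ N := by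
  rw [sub_eq_add_neg, add_pow, ← sum_subset (range_subset_range.mpr (by omega : N + 1 ≤ n + 1))]
  · exact sum_congr rfl fun m _ => by ring
  · intro m _ hm
    rw [mem_range, not_lt] at hm
    simp [choose_eq_zero_of_lt (by omega : N < m)]

lemma EulerPoly_eq_sum (p n : ℕ) (x : ℝ) :
    EulerPoly p n x = ∑ k ∈ range (n + 1), k ! * Sp p n k * (x - 1) ^ (n - k) := by
  simp only [EulerPoly, EulerNum]
  push_cast
  simp_rw [sum_mul]
  rw [sum_comm]
  refine sum_congr rfl fun k hk => ?_
  rw [← sum_range_choose_mul_neg_one_pow_mul_pow x (by omega : n - k ≤ n), mul_sum]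
  exact sum_congr rfl fun m _ => by ring

/-- The EGF of the higher order Eulerian polynomials:
`∑ A_n^p(x) t^n/n! = (1 - (x-1)⁻¹ σ^p((x-1)t))⁻¹` for `x ≠ 1`. -/
theorem egf_eulerian (p : ℕ) (hp : 1 ≤ p) (x : ℝ) (hx : x ≠ 1) :
    (PowerSeries.mk fun n => EulerPoly p n x / n.factorial) =
      (1 - PowerSeries.C (R := ℝ) (1 / (x - 1)) *
          PSComp (sigmaP p) (PowerSeries.C (R := ℝ) (x - 1) * PowerSeries.X))⁻¹ := by
  have hx1 : x - 1 ≠ 0 := sub_ne_zero.mpr hx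
  rw [PSComp_C_mul_X]
  set u := C (1 / (x - 1)) * rescale (x - 1) (sigmaP p)
  have hu0 : constantCoeff u = 0 := by
    rw [map_mul, ← coeff_zero_eq_constantCoeff_apply (rescale _ _), coeff_rescale,
      coeff_zero_eq_constantCoeff_apply, constantCoeff_sigmaP, mul_zero, mul_zero]
  have hcoeff (n k : ℕ) (hk : k ≤ n) :
      coeff n (u ^ k) = k ! * Sp p n k * (x - 1) ^ (n - k) / n ! := by
    rw [mul_pow, ← map_pow, ← map_pow, coeff_C_mul, coeff_rescale, coeff_sigmaP_pow hp,
      pow_sub₀ _ hx1 hk, one_div, inv_pow]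
    field_simp
  rw [← PSComp_mk_one hu0]
  ext n
  rw [coeff_mk, PSComp, coeff_mk, EulerPoly_eq_sum, sum_div]
  refine sum_congr rfl fun k hk => ?_
  rw [hcoeff n k (mem_range_succ_iff.mp hk)]
  simp
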